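/- arXiv:math/0206164 — 2 statements merged into one kernel-verified Lean document; each statement's English description precedes it below -/
import Mathlib

section
/- For all integers k, m ≥ 1, the following identity of polynomials in q (with integer coefficients) holds: ∑_{a=0}^{k-1} ∑_{b=0}^{m-1} (-1)^{a+b+1} · C(k,a) · C(m,b) · (∑_{r=0}^{min(k-a-1, m-b-1)} C(k-a-1, r) · C(m-b-1, r) · q^r) = (-1)^{k+m+1} · ∑_{r=0}^{min(k-1, m-1)} q^r. -/
open Polynomial Finset


lemma geom_aux (k : ℕ) :
    (1 + X) * ∑ j ∈ range k, (C ((-1:ℤ)^(k-1-j))) * X ^ j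
      = X ^ k - C ((-1:ℤ)^k) := by
  induction k with
  | zero => simp
  | succ k ih =>
    rw [Finset.sum_range_succ]
    have h1 : ∀ j ∈ range k, (C ((-1:ℤ)^(k+1-1-j))) * X ^ j
        = -((C ((-1:ℤ)^(k-1-j))) * X ^ j) := by
      intro j hj
      rw [mem_range] at hj
      have h2 : k + 1 - 1 - j = (k - 1 - j) + 1 := by omega
      rw [h2, pow_succ]
      simp [C_mul]
    rw [Finset.sum_congr rfl h1, Finset.sum_neg_distrib]
    have h3 : k + 1 - 1 - k = 0 := by omega
    rw [h3]
    rw [mul_add, mul_neg, ih, pow_succ]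
    simp [C_mul]
    ring

lemma lhs_aux (k : ℕ) :
    (1 + X) * ∑ a ∈ range k, (C ((-1:ℤ)^a * k.choose a)) * (1+X) ^ (k-1-a)
      = X ^ k - C ((-1:ℤ)^k) := by
  rw [Finset.mul_sum]
  have h : ∀ a ∈ range k, (1+X) * ((C ((-1:ℤ)^a * k.choose a)) * (1+X)^(k-1-a))
      = C (-1:ℤ)^a * (1+X)^(k-a) * (k.choose a : Polynomial ℤ) := by
    intro a ha; rw [mem_range] at ha
    have h2 : k - a = (k - 1 - a) + 1 := by omega
    rw [h2, pow_succ]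
    simp [C_mul]
    push_cast
    ring
  rw [Finset.sum_congr rfl h]
  have hap := add_pow (C (-1:ℤ)) (1+X) k
  rw [Finset.sum_range_succ] at hap
  have hx : (C (-1:ℤ)) + (1+X) = X := by simp [C_neg]
  rw [hx] at hap
  simp only [Nat.sub_self, pow_zero, mul_one, Nat.choose_self, Nat.cast_one] at hap
  rw [C_pow]
  exact eq_sub_of_add_eq hap.symm

lemma P_eq (k : ℕ) :
    ∑ a ∈ range k, (C ((-1:ℤ)^a * k.choose a)) * (1+X) ^ (k-1-a)
      = ∑ j ∈ range k, (C ((-1:ℤ)^(k-1-j))) * X ^ j := by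
  have h10 : (1 + X : Polynomial ℤ) ≠ 0 := fun h => by simpa using congrArg (eval 0) h
  exact mul_left_cancel₀ h10 (by rw [lhs_aux, geom_aux])

lemma keyZ (k r : ℕ) :
    ∑ a ∈ range k, (-1:ℤ)^a * k.choose a * ((k-1-a).choose r)
      = if r < k then (-1:ℤ)^(k-1-r) else 0 := by
  have h := congrArg (fun p => Polynomial.coeff p r) (P_eq k)
  simp only [finset_sum_coeff, coeff_C_mul, coeff_one_add_X_pow, coeff_X_pow,
    mul_ite, mul_one, mul_zero] at h
  rw [Finset.sum_ite_eq (range k) r] at h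
  simpa [mem_range, mul_assoc] using h

lemma keyS (k r : ℕ) :
    ∑ a ∈ range k, (-1:Polynomial ℤ)^a * (k.choose a : Polynomial ℤ) *
        ((k-a-1).choose r : Polynomial ℤ)
      = if r < k then (-1:Polynomial ℤ)^(k-1-r) else 0 := by
  have h := congrArg (C : ℤ → Polynomial ℤ) (keyZ k r)
  rw [map_sum, apply_ite C, map_zero] at h
  simp only [C_mul, C_pow, C_neg, C_1, C_eq_natCast] at h
  rw [← h]
  apply Finset.sum_congr rfl
  intro a ha
  rw [show k - a - 1 = k - 1 - a from by omega]
lemma double_sum (k m r : ℕ) :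
    ∑ a ∈ range k, ∑ b ∈ range m,
      (-1:Polynomial ℤ)^(a+b+1) * (k.choose a : Polynomial ℤ) * (m.choose b : Polynomial ℤ) *
        (((k-a-1).choose r : Polynomial ℤ) * ((m-b-1).choose r : Polynomial ℤ) * X^r)
    = -((if r < k then (-1:Polynomial ℤ)^(k-1-r) else 0) *
        (if r < m then (-1:Polynomial ℤ)^(m-1-r) else 0)) * X^r := by
  have hb : ∀ a, ∑ b ∈ range m,
      (-1:Polynomial ℤ)^(a+b+1) * (k.choose a : Polynomial ℤ) * (m.choose b : Polynomial ℤ) *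
        (((k-a-1).choose r : Polynomial ℤ) * ((m-b-1).choose r : Polynomial ℤ) * X^r)
      = (-((-1:Polynomial ℤ)^a * (k.choose a : Polynomial ℤ) *
            ((k-a-1).choose r : Polynomial ℤ)) * X^r) *
          (if r < m then (-1:Polynomial ℤ)^(m-1-r) else 0) := by
    intro a
    rw [← keyS m r, Finset.mul_sum]
    apply Finset.sum_congr rfl
    intro b _
    rw [pow_add, pow_add, pow_one]
    ring
  rw [Finset.sum_congr rfl (fun a _ => hb a), ← Finset.sum_mul, ← Finset.sum_mul,
    Finset.sum_neg_distrib, keyS]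
  ring


/-- Lemma 3.1 of the paper (Warrington, "Two formulae for inverse
Kazhdan-Lusztig polynomials in `Sₙ`"): a binomial identity of
polynomials in `q` (here `q = Polynomial.X` over `ℤ`). -/
theorem technical_lemma_one (k m : ℕ) (hk : 1 ≤ k) (hm : 1 ≤ m) :
    ∑ a ∈ range k, ∑ b ∈ range m,
      (-1 : Polynomial ℤ) ^ (a + b + 1) * (Nat.choose k a : Polynomial ℤ) *
        (Nat.choose m b : Polynomial ℤ) *
        ∑ r ∈ range (min (k - a - 1) (m - b - 1) + 1),
          (Nat.choose (k - a - 1) r : Polynomial ℤ) *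
            (Nat.choose (m - b - 1) r : Polynomial ℤ) * X ^ r
    = (-1 : Polynomial ℤ) ^ (k + m + 1) *
        ∑ r ∈ range (min (k - 1) (m - 1) + 1), X ^ r := by
  set N := max k m with hNdef
  have e1 : ∑ a ∈ range k, ∑ b ∈ range m,
      (-1 : Polynomial ℤ) ^ (a + b + 1) * (Nat.choose k a : Polynomial ℤ) *
        (Nat.choose m b : Polynomial ℤ) *
        ∑ r ∈ range (min (k - a - 1) (m - b - 1) + 1),
          (Nat.choose (k - a - 1) r : Polynomial ℤ) *
            (Nat.choose (m - b - 1) r : Polynomial ℤ) * X ^ r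
      = ∑ a ∈ range k, ∑ b ∈ range m, ∑ r ∈ range N,
        (-1 : Polynomial ℤ) ^ (a + b + 1) * (Nat.choose k a : Polynomial ℤ) *
          (Nat.choose m b : Polynomial ℤ) *
          ((Nat.choose (k - a - 1) r : Polynomial ℤ) *
            (Nat.choose (m - b - 1) r : Polynomial ℤ) * X ^ r) := by
    apply Finset.sum_congr rfl; intro a ha
    apply Finset.sum_congr rfl; intro b hb
    rw [mem_range] at ha hb
    rw [Finset.mul_sum]
    apply Finset.sum_subset
    · intro x hx; rw [mem_range] at hx ⊢; omega
    · intro x _ hnx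
      rw [mem_range, not_lt] at hnx
      rcases le_total (k - a - 1) (m - b - 1) with h | h
      · rw [Nat.choose_eq_zero_of_lt (show k - a - 1 < x by omega)]
        simp
      · rw [Nat.choose_eq_zero_of_lt (show m - b - 1 < x by omega)]
        simp
  rw [e1]
  have e2 : ∀ a ∈ range k, (∑ b ∈ range m, ∑ r ∈ range N,
      (-1 : Polynomial ℤ) ^ (a + b + 1) * (Nat.choose k a : Polynomial ℤ) *
        (Nat.choose m b : Polynomial ℤ) *
        ((Nat.choose (k - a - 1) r : Polynomial ℤ) *
          (Nat.choose (m - b - 1) r : Polynomial ℤ) * X ^ r))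
      = ∑ r ∈ range N, ∑ b ∈ range m,
      (-1 : Polynomial ℤ) ^ (a + b + 1) * (Nat.choose k a : Polynomial ℤ) *
        (Nat.choose m b : Polynomial ℤ) *
        ((Nat.choose (k - a - 1) r : Polynomial ℤ) *
          (Nat.choose (m - b - 1) r : Polynomial ℤ) * X ^ r) :=
    fun a _ => Finset.sum_comm
  rw [Finset.sum_congr rfl e2, Finset.sum_comm]
  rw [Finset.sum_congr rfl (fun r _ => double_sum k m r)]
  have hmin : min (k - 1) (m - 1) + 1 = min k m := by omega
  rw [hmin, Finset.mul_sum]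
  have hsub : ∑ r ∈ range (min k m), -((if r < k then (-1:Polynomial ℤ)^(k-1-r) else 0) *
        (if r < m then (-1:Polynomial ℤ)^(m-1-r) else 0)) * X^r
      = ∑ r ∈ range N, -((if r < k then (-1:Polynomial ℤ)^(k-1-r) else 0) *
        (if r < m then (-1:Polynomial ℤ)^(m-1-r) else 0)) * X^r := by
    apply Finset.sum_subset
    · intro x hx; rw [mem_range] at hx ⊢; omega
    · intro x _ hnx
      rw [mem_range, not_lt] at hnx
      rcases le_total k m with h | h
      · rw [if_neg (show ¬ x < k by omega)]; ring
      · rw [if_neg (show ¬ x < m by omega), mul_zero]; ring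
  rw [← hsub]
  apply Finset.sum_congr rfl
  intro r hr
  rw [mem_range] at hr
  rw [if_pos (show r < k by omega), if_pos (show r < m by omega)]
  have h2 : ((-1:Polynomial ℤ))^(2*(r+1)) = 1 := by
    rw [pow_mul]; norm_num
  rw [show k + m + 1 = ((k-1-r) + ((m-1-r) + 1)) + 2*(r+1) from by omega,
    pow_add, h2, mul_one, pow_add, pow_add, pow_one]
  ring
end

section
/- For all integers k, m ≥ 1 and every integer r with 0 ≤ r ≤ min(k-1, m-1), one has ∑_{a=0}^{k-1} ∑_{b=0}^{m-1} (-1)^{a+b+1} · C(k,a) · C(m,b) · C(k-a-1, r) · C(m-b-1, r) = (-1)^{k+m+1}. -/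
open Finset

lemma trin (N b r : ℕ) :
    (N.choose b) * ((N - b).choose r) = (N.choose r) * ((N - r).choose b) := by
  rcases le_or_gt (b + r) N with h | h
  · have hb : b ≤ N := le_trans (Nat.le_add_right _ _) h
    have hr' : r ≤ N - b := Nat.le_sub_of_add_le (by omega)
    have := Nat.choose_mul (n := N) hr'
    -- C(N, N-b)*C(N-b, r) = C(N, r)*C(N-r, N-b-r)
    rw [Nat.choose_symm hb] at this
    rw [this]
    congr 1
    have hb2 : b ≤ N - r := by omega
    have e : N - b - r = (N - r) - b := by omega
    rw [e]
    exact Nat.choose_symm hb2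
  · rcases le_or_gt b N with hb | hb
    · rcases le_or_gt r N with hrN | hrN
      · rw [Nat.choose_eq_zero_of_lt (show N - b < r by omega),
          Nat.choose_eq_zero_of_lt (show N - r < b by omega)]
        ring
      · rw [Nat.choose_eq_zero_of_lt (show N - b < r by omega),
          Nat.choose_eq_zero_of_lt (show N < r by omega)]
        ring
    · rw [Nat.choose_eq_zero_of_lt hb,
        Nat.choose_eq_zero_of_lt (show N - r < b by omega)]
      ring

lemma keyW (N r : ℕ) (hr : r < N) :
    ∑ b ∈ range (N + 1), (-1 : ℤ) ^ b * (N.choose b : ℤ) * ((N - b).choose r : ℤ) = 0 := by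
  have h1 : ∀ b, (-1 : ℤ) ^ b * (N.choose b : ℤ) * ((N - b).choose r : ℤ)
      = (N.choose r : ℤ) * ((-1 : ℤ) ^ b * ((N - r).choose b : ℤ)) := by
    intro b
    rw [mul_assoc, ← Nat.cast_mul, trin N b r, Nat.cast_mul]
    ring
  simp only [h1, ← mul_sum]
  have h2 : ∑ b ∈ range (N + 1), (-1 : ℤ) ^ b * ((N - r).choose b : ℤ)
      = ∑ b ∈ range (N - r + 1), (-1 : ℤ) ^ b * ((N - r).choose b : ℤ) := by
    symm
    apply Finset.sum_subset (by gcongr <;> omega)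
    intro b _ hb
    simp only [mem_range, not_lt] at hb
    rw [Nat.choose_eq_zero_of_lt (by omega)]
    ring
  rw [h2, Int.alternating_sum_range_choose_of_ne (by omega)]
  ring

lemma keyT : ∀ n : ℕ, ∀ r ≤ n,
    ∑ a ∈ range (n + 1), (-1 : ℤ) ^ a * ((n + 1).choose a : ℤ) * ((n - a).choose r : ℤ)
      = (-1 : ℤ) ^ (n - r) := by
  intro n
  induction n with
  | zero =>
    intro r hr
    interval_cases r
    simp
  | succ n ih =>
    intro r hr
    rcases eq_or_lt_of_le hr with h | h
    · -- r = n + 1 : only a = 0 contributes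
      subst h
      rw [Finset.sum_eq_single 0]
      · simp
      · intro a ha hne
        have ha' : a < n + 2 := mem_range.mp ha
        rw [Nat.choose_eq_zero_of_lt (show n + 1 - a < n + 1 by omega)]
        ring
      · simp
    · have hrn : r ≤ n := by omega
      rw [Finset.sum_range_succ'] -- peel off a = 0
      have hf0 : (-1 : ℤ) ^ 0 * ((n + 2).choose 0 : ℤ) * ((n + 1 - 0).choose r : ℤ)
          = ((n + 1).choose r : ℤ) := by simp
      have hstep : ∀ a ∈ range (n + 1),
          (-1 : ℤ) ^ (a + 1) * ((n + 2).choose (a + 1) : ℤ) * ((n + 1 - (a + 1)).choose r : ℤ)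
          = -((-1 : ℤ) ^ a * ((n + 1).choose a : ℤ) * ((n - a).choose r : ℤ))
            - (-1 : ℤ) ^ a * ((n + 1).choose (a + 1) : ℤ) * ((n - a).choose r : ℤ) := by
        intro a ha
        have h1 : (n + 2).choose (a + 1) = (n + 1).choose a + (n + 1).choose (a + 1) :=
          Nat.choose_succ_succ' (n + 1) a
        have h2 : n + 1 - (a + 1) = n - a := by omega
        rw [h1, h2]
        push_cast
        ring
      rw [Finset.sum_congr rfl hstep, hf0]
      rw [Finset.sum_sub_distrib]
      have hR : ∑ a ∈ range (n + 1),
          (-1 : ℤ) ^ a * ((n + 1).choose (a + 1) : ℤ) * ((n - a).choose r : ℤ)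
          = ((n + 1).choose r : ℤ) := by
        have : ∑ a ∈ range (n + 1),
            (-1 : ℤ) ^ a * ((n + 1).choose (a + 1) : ℤ) * ((n - a).choose r : ℤ)
            = -∑ a ∈ range (n + 1),
              (-1 : ℤ) ^ (a + 1) * ((n + 1).choose (a + 1) : ℤ) * ((n + 1 - (a + 1)).choose r : ℤ) := by
          rw [← Finset.sum_neg_distrib]
          apply Finset.sum_congr rfl
          intro a ha
          have h2 : n + 1 - (a + 1) = n - a := by omega
          rw [h2]
          ring
        rw [this]
        have hW := keyW (n + 1) r (by omega)
        rw [Finset.sum_range_succ'] at hW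
        have : ∑ a ∈ range (n + 1),
            (-1 : ℤ) ^ (a + 1) * ((n + 1).choose (a + 1) : ℤ) * ((n + 1 - (a + 1)).choose r : ℤ)
            = -((n + 1).choose r : ℤ) := by
          have h0 : (-1 : ℤ) ^ 0 * ((n + 1).choose 0 : ℤ) * ((n + 1 - 0).choose r : ℤ)
              = ((n + 1).choose r : ℤ) := by simp
          linarith [hW]
        rw [this]; ring
      have hT := ih r hrn
      have hsn : ∑ a ∈ range (n + 1),
          -((-1 : ℤ) ^ a * ((n + 1).choose a : ℤ) * ((n - a).choose r : ℤ))
          = -(-1 : ℤ) ^ (n - r) := by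
        rw [Finset.sum_neg_distrib, hT]
      rw [hsn, hR]
      have e : n + 1 - r = (n - r) + 1 := by omega
      rw [e, pow_succ]
      ring

/-- The coefficient-of-`q^r` form of Lemma 3.1 of the paper. -/
theorem technical_lemma_one_coeff (k m r : ℕ) (hk : 1 ≤ k) (hm : 1 ≤ m)
    (hr : r ≤ min (k - 1) (m - 1)) :
    ∑ a ∈ range k, ∑ b ∈ range m,
      (-1 : ℤ) ^ (a + b + 1) * (Nat.choose k a : ℤ) * (Nat.choose m b : ℤ) *
        (Nat.choose (k - a - 1) r : ℤ) * (Nat.choose (m - b - 1) r : ℤ)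
    = (-1 : ℤ) ^ (k + m + 1) := by
  obtain ⟨k', rfl⟩ : ∃ k', k = k' + 1 := ⟨k - 1, by omega⟩
  obtain ⟨m', rfl⟩ : ∃ m', m = m' + 1 := ⟨m - 1, by omega⟩
  have hrk : r ≤ k' := by omega
  have hrm : r ≤ m' := by omega
  have step : ∀ a ∈ range (k' + 1),
      ∑ b ∈ range (m' + 1),
        (-1 : ℤ) ^ (a + b + 1) * ((k' + 1).choose a : ℤ) * ((m' + 1).choose b : ℤ) *
          ((k' + 1 - a - 1).choose r : ℤ) * ((m' + 1 - b - 1).choose r : ℤ)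
      = (-((-1 : ℤ) ^ a * ((k' + 1).choose a : ℤ) * ((k' - a).choose r : ℤ))) *
          (-1 : ℤ) ^ (m' - r) := by
    intro a _
    have hb : ∀ b ∈ range (m' + 1),
        (-1 : ℤ) ^ (a + b + 1) * ((k' + 1).choose a : ℤ) * ((m' + 1).choose b : ℤ) *
          ((k' + 1 - a - 1).choose r : ℤ) * ((m' + 1 - b - 1).choose r : ℤ)
        = (-((-1 : ℤ) ^ a * ((k' + 1).choose a : ℤ) * ((k' - a).choose r : ℤ))) *
            ((-1 : ℤ) ^ b * ((m' + 1).choose b : ℤ) * ((m' - b).choose r : ℤ)) := by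
      intro b _
      have e1 : k' + 1 - a - 1 = k' - a := by omega
      have e2 : m' + 1 - b - 1 = m' - b := by omega
      rw [e1, e2, pow_add, pow_add]
      ring
    rw [Finset.sum_congr rfl hb, ← Finset.mul_sum, keyT m' r hrm]
  rw [Finset.sum_congr rfl step, ← Finset.sum_mul, Finset.sum_neg_distrib,
    keyT k' r hrk]
  have e : k' + 1 + (m' + 1) + 1 = ((k' - r) + (m' - r)) + (2 * r + 3) := by omega
  have h3 : (-1 : ℤ) ^ (2 * r + 3) = -1 := Odd.neg_one_pow ⟨r + 1, by ring⟩
  rw [e, pow_add, pow_add, h3]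
  ring
end
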